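/- In an AL-monoid, if a ≤ b ≤ c then b lies metrically between a and c, i.e. a*b + b*c = a*c. -/
import Mathlib


/-- An Autometrized lattice ordered monoid (AL-monoid). -/
class ALMonoid (A : Type*) extends Lattice A, AddCommMonoid A where
  amul : A → A → A
  add_le_add_left' : ∀ a b : A, a ≤ b → ∀ c : A, c + a ≤ c + b
  amul_core : ∀ a b : A, amul a (a ⊓ b) + b = a ⊔ b
  add_contract : ∀ a x y : A, amul (a + x) (a + y) ≤ amul x y
  sup_contract : ∀ a x y : A, amul (a ⊔ x) (a ⊔ y) ≤ amul x y
  inf_contract : ∀ a x y : A, amul (a ⊓ x) (a ⊓ y) ≤ amul x y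
  amul_contract : ∀ a x y : A, amul (amul a x) (amul a y) ≤ amul x y
  inf_amul_sup : ∀ a b : A, amul a (a ⊔ b) ⊓ amul b (a ⊔ b) = 0
  amul_nonneg : ∀ a b : A, 0 ≤ amul a b
  amul_eq_zero_iff : ∀ a b : A, amul a b = 0 ↔ a = b
  amul_comm : ∀ a b : A, amul a b = amul b a
  amul_triangle : ∀ a b c : A, amul a b ≤ amul a c + amul c b

open ALMonoid

infixl:70 " ⋆ " => ALMonoid.amul

theorem stmt9 {A : Type*} [ALMonoid A] (a b c : A)
    (hab : a ≤ b) (hbc : b ≤ c) :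
    a ⋆ b + b ⋆ c = a ⋆ c := by
  -- core lemma: for x ≤ y, y⋆x + x = y
  have core : ∀ x y : A, x ≤ y → y ⋆ x + x = y := by
    intro x y h
    have := amul_core y x
    rwa [inf_eq_right.mpr h, sup_eq_left.mpr h] at this
  set d := a ⋆ b with hd
  set e := b ⋆ c with he
  set f := a ⋆ c with hf
  have hac : a ≤ c := le_trans hab hbc
  -- d ≤ f via inf contraction at b
  have hdf : d ≤ f := by
    have := inf_contract b a c
    rwa [inf_eq_right.mpr hab, inf_eq_left.mpr hbc] at this
  -- b = a + d, c = a + f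
  have hb : a + d = b := by
    have := core a b hab
    rwa [amul_comm b a, ← hd, add_comm] at this
  have hc : a + f = c := by
    have := core a c hac
    rwa [amul_comm c a, ← hf, add_comm] at this
  -- e ≤ d ⋆ f
  have hedf : e ≤ d ⋆ f := by
    have := add_contract a d f
    rwa [hb, hc, ← he] at this
  -- f = d ⋆ f + d
  have hfdf : d ⋆ f + d = f := by
    have := core d f hdf
    rwa [amul_comm f d] at this
  -- d + e ≤ f
  have h1 : d + e ≤ f := by
    calc d + e ≤ d + d ⋆ f := add_le_add_left' e (d ⋆ f) hedf d
    _ = f := by rw [add_comm, hfdf]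
  -- f ≤ d + e
  have h2 : f ≤ d + e := amul_triangle a c b
  exact le_antisymm h1 h2
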